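/- A connected simple undirected graph G = (V, E) with maximum degree at most 5 admits a partition of V into triangles if and only if the hypergraph ⌜G⌝ is generated by the bonding grammar TBG whose start hypergraphs are the triangle hypergraphs TH(k₁,k₂,k₃) for 0 ≤ k₁ ≤ k₂ ≤ k₃ ≤ 3, with N = {I,O}, T = {b}, and I ⊗ O = b. -/

import Mathlib

/-! ## Hypergraphs (over a label alphabet `Λ`), bonding, breaking bonds,
bonding grammars, following "Bonding Grammars" (Pshenitsyn). -/

structure BHypergraph (Λ : Type) where
  V : Finset ℕ
  E : Finset ℕ
  att : ℕ → List ℕ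
  lab : ℕ → Λ

namespace BHypergraph

variable {Λ : Type}

/-- Attachment vertices lie in `V` and attachment lengths agree with types. -/
def WellFormed (typ : Λ → ℕ) (H : BHypergraph Λ) : Prop :=
  (∀ e ∈ H.E, ∀ v ∈ H.att e, v ∈ H.V) ∧
  (∀ e ∈ H.E, (H.att e).length = typ (H.lab e))

def Adj (H : BHypergraph Λ) (u v : ℕ) : Prop :=
  ∃ e ∈ H.E, u ∈ H.att e ∧ v ∈ H.att e

/-- There is a path between `u` and `v` in `H`. -/
def HasPath (H : BHypergraph Λ) (u v : ℕ) : Prop :=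
  Relation.ReflTransGen H.Adj u v

def Connected (H : BHypergraph Λ) : Prop :=
  ∀ u ∈ H.V, ∀ v ∈ H.V, H.HasPath u v

/-- The degree of a vertex: the number of pairs `(e, i)` with
`att e ( i ) = v`, i.e. occurrences of `v` in attachment sequences. -/
def degree (H : BHypergraph Λ) (v : ℕ) : ℕ :=
  ∑ e ∈ H.E, (H.att e).count v

def degreeSet (H : BHypergraph Λ) : Set ℕ :=
  {d | ∃ v ∈ H.V, H.degree v = d}

def Isomorphic (H G : BHypergraph Λ) : Prop :=
  ∃ f g : ℕ → ℕ,
    Set.BijOn f ↑H.V ↑G.V ∧ Set.BijOn g ↑H.E ↑G.E ∧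
    ∀ e ∈ H.E, G.att (g e) = (H.att e).map f ∧ G.lab (g e) = H.lab e

end BHypergraph

/-- A single bonding step: two distinct hyperedges `e₁, e₂` whose labels can be
bonded are merged into a single new hyperedge `e'` with concatenated
attachment sequence and label `lab e₁ ⊗ lab e₂`. -/
def BondingStep {Λ : Type} (bond : Λ → Λ → Option Λ) (H H' : BHypergraph Λ) : Prop :=
  ∃ e₁ e₂ e' t,
    e₁ ∈ H.E ∧ e₂ ∈ H.E ∧ e₁ ≠ e₂ ∧ e' ∉ H.E ∧
    bond (H.lab e₁) (H.lab e₂) = some t ∧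
    H'.V = H.V ∧
    H'.E = (H.E \ {e₁, e₂}) ∪ {e'} ∧
    (∀ e ∈ H.E \ {e₁, e₂}, H'.att e = H.att e ∧ H'.lab e = H.lab e) ∧
    H'.att e' = H.att e₁ ++ H.att e₂ ∧
    H'.lab e' = t

/-- Breaking the bond `e'` (whose label is `A₁ ⊗ A₂`) of `H'`, introducing the
fresh hyperedges `e₁, e₂`, yields `H`. -/
def BreakBondAt {Λ : Type} (typ : Λ → ℕ) (bond : Λ → Λ → Option Λ)
    (H' H : BHypergraph Λ) (e' e₁ e₂ : ℕ) : Prop :=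
  ∃ A₁ A₂,
    e' ∈ H'.E ∧ e₁ ∉ H'.E ∧ e₂ ∉ H'.E ∧ e₁ ≠ e₂ ∧
    bond A₁ A₂ = some (H'.lab e') ∧
    H.V = H'.V ∧
    H.E = (H'.E \ {e'}) ∪ {e₁, e₂} ∧
    (∀ e ∈ H'.E \ {e'}, H.att e = H'.att e ∧ H.lab e = H'.lab e) ∧
    H.att e₁ = (H'.att e').take (typ A₁) ∧
    H.att e₂ = (H'.att e').drop (typ A₁) ∧
    H.lab e₁ = A₁ ∧ H.lab e₂ = A₂

def BreakBond {Λ : Type} (typ : Λ → ℕ) (bond : Λ → Λ → Option Λ)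
    (H' H : BHypergraph Λ) : Prop :=
  ∃ e' e₁ e₂, BreakBondAt typ bond H' H e' e₁ e₂

/-- `BreaksTo typ bond H l F`: starting from `H` and successively breaking the
bonds listed in `l` yields `F`. -/
def BreaksTo {Λ : Type} (typ : Λ → ℕ) (bond : Λ → Λ → Option Λ) :
    BHypergraph Λ → List ℕ → BHypergraph Λ → Prop
  | H, [], F => H = F
  | H, e :: l, F => ∃ H₁ e₁ e₂, BreakBondAt typ bond H H₁ e e₁ e₂ ∧ BreaksTo typ bond H₁ l F

/-- `H` is a disjoint union of copies of hypergraphs from `Zs`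
(this plays the role of `m · Z`). -/
def IsUnionOfCopies {Λ : Type} (Zs : Set (BHypergraph Λ)) (H : BHypergraph Λ) : Prop :=
  ∃ (n : ℕ) (cV cE : ℕ → ℕ),
    (∀ v ∈ H.V, cV v < n) ∧ (∀ e ∈ H.E, cE e < n) ∧
    (∀ e ∈ H.E, ∀ v ∈ H.att e, v ∈ H.V) ∧
    (∀ e ∈ H.E, ∀ v ∈ H.att e, cV v = cE e) ∧
    ∀ i < n, ∃ Z0 ∈ Zs, BHypergraph.Isomorphic
      ⟨H.V.filter (fun v => cV v = i), H.E.filter (fun e => cE e = i), H.att, H.lab⟩ Z0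

/-- `C` is a connected component of `H`. -/
def IsComponent {Λ : Type} (H C : BHypergraph Λ) : Prop :=
  C.V ⊆ H.V ∧ C.att = H.att ∧ C.lab = H.lab ∧ C.V.Nonempty ∧
  (∀ u ∈ C.V, ∀ v ∈ H.V, (H.HasPath u v ↔ v ∈ C.V)) ∧
  ∀ e, e ∈ C.E ↔ (e ∈ H.E ∧ ∃ v ∈ H.att e, v ∈ C.V)

/-- Disjoint union of two hypergraphs (via an even/odd renaming). -/
def hsum {Λ : Type} (H K : BHypergraph Λ) : BHypergraph Λ :=
  ⟨H.V.image (fun v => 2 * v) ∪ K.V.image (fun v => 2 * v + 1),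
   H.E.image (fun e => 2 * e) ∪ K.E.image (fun e => 2 * e + 1),
   fun e => if e % 2 = 0 then (H.att (e / 2)).map (fun v => 2 * v)
            else (K.att (e / 2)).map (fun v => 2 * v + 1),
   fun e => if e % 2 = 0 then H.lab (e / 2) else K.lab (e / 2)⟩

/-- A bonding grammar: typed labels, nonterminal and terminal alphabets, a
partial bond function, and a tuple `Z` of start hypergraphs. -/
structure BondingGrammar (Λ : Type) where
  typ : Λ → ℕ
  N : Set Λ
  T : Set Λ
  bond : Λ → Λ → Option Λ
  k : ℕ
  Z : Fin k → BHypergraph Λ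

namespace BondingGrammar

variable {Λ : Type}

/-- Side conditions from the definition of a bonding grammar: `N` and `T` are
disjoint, the start hypergraphs are connected and well-formed, and the bond
function is a partial injective function `N × N ⇀ T` adding the types. -/
def WellFormed (G : BondingGrammar Λ) : Prop :=
  Disjoint G.N G.T ∧
  (∀ i, (G.Z i).Connected ∧ (G.Z i).WellFormed G.typ) ∧
  (∀ A₁ A₂ t, G.bond A₁ A₂ = some t →
    A₁ ∈ G.N ∧ A₂ ∈ G.N ∧ t ∈ G.T ∧ G.typ t = G.typ A₁ + G.typ A₂) ∧
  (∀ A₁ A₂ B₁ B₂ t, G.bond A₁ A₂ = some t → G.bond B₁ B₂ = some t →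
    A₁ = B₁ ∧ A₂ = B₂)

def ZSet (G : BondingGrammar Λ) : Set (BHypergraph Λ) :=
  {Z0 | ∃ i, Z0 = G.Z i}

/-- `G` generates `H` if some `m · Z` derives `H` by bonding steps. -/
def Generates (G : BondingGrammar Λ) (H : BHypergraph Λ) : Prop :=
  ∃ H₀, IsUnionOfCopies G.ZSet H₀ ∧
    Relation.ReflTransGen (BondingStep G.bond) H₀ H

/-- The language of `G`: generated hypergraphs all of whose labels are terminal. -/
def Lang (G : BondingGrammar Λ) : Set (BHypergraph Λ) :=
  {H | G.Generates H ∧ ∀ e ∈ H.E, H.lab e ∈ G.T}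

end BondingGrammar

/-! Finite undirected graphs, given by a Boolean adjacency function, and
partitions into triangles. -/

/-- `TriPart adj`: the vertex set can be partitioned into 3-element sets of
pairwise adjacent vertices. -/
def TriPart {n : ℕ} (adj : Fin n → Fin n → Bool) : Prop :=
  ∃ P : Finset (Finset (Fin n)),
    (∀ t ∈ P, t.card = 3 ∧ ∀ u ∈ t, ∀ v ∈ t, u ≠ v → adj u v = true) ∧
    ∀ v : Fin n, ∃! t, t ∈ P ∧ v ∈ t

/-- A graph instance: a number of vertices together with an adjacency function. -/
def GraphInst : Type := Σ n : ℕ, Fin n → Fin n → Bool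

/-- The adjacency function is symmetric and irreflexive (simple undirected graph). -/
def GoodGraph (x : GraphInst) : Prop :=
  (∀ u v, x.2 u v = x.2 v u) ∧ (∀ v, x.2 v v = false)

def degLe (x : GraphInst) (k : ℕ) : Prop :=
  ∀ v, (Finset.univ.filter (fun u => x.2 v u = true)).card ≤ k

def ConnG (x : GraphInst) : Prop :=
  ∀ u v : Fin x.1, Relation.ReflTransGen (fun a b => x.2 a b = true) u v

/-- Partition into triangles for graphs of maximum degree 4 (NP-complete by
van Rooij et al.). -/
def PiT4 (x : GraphInst) : Prop :=
  GoodGraph x ∧ degLe x 4 ∧ TriPart x.2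

/-- Problem 5Conn-PiT: partition into triangles for connected graphs of
maximum degree at most 5. -/
def PiT5conn (x : GraphInst) : Prop :=
  GoodGraph x ∧ ConnG x ∧ degLe x 5 ∧ TriPart x.2

/-! The bonding grammar `TBG` built from triangle hypergraphs, and the encoding
`⌜G⌝` of a simple undirected graph as a hypergraph. -/

inductive Lab : Type
  | I | O | b
deriving DecidableEq

def typLab : Lab → ℕ
  | .I => 1 | .O => 1 | .b => 2

def bondLab : Lab → Lab → Option Lab
  | .I, .O => some .b
  | _, _ => none

/-- `TH k₁ k₂ k₃`: the triangle graph on vertices `0,1,2` (each pair joined by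
a pair of oppositely directed `b`-edges), with `kᵢ` additional `I`-labelled and
`kᵢ` additional `O`-labelled type-1 hyperedges attached to vertex `i`. -/
def TH (k₁ k₂ k₃ : ℕ) : BHypergraph Lab :=
  ⟨{0, 1, 2},
   Finset.range (6 + 2 * k₁ + 2 * k₂ + 2 * k₃),
   fun e =>
     if e = 0 then [0, 1] else if e = 1 then [1, 0]
     else if e = 2 then [1, 2] else if e = 3 then [2, 1]
     else if e = 4 then [0, 2] else if e = 5 then [2, 0]
     else if e < 6 + 2 * k₁ then [0]
     else if e < 6 + 2 * k₁ + 2 * k₂ then [1] else [2],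
   fun e =>
     if e < 6 then Lab.b
     else if e < 6 + 2 * k₁ then (if e < 6 + k₁ then Lab.I else Lab.O)
     else if e < 6 + 2 * k₁ + 2 * k₂ then
       (if e < 6 + 2 * k₁ + k₂ then Lab.I else Lab.O)
     else (if e < 6 + 2 * k₁ + 2 * k₂ + k₃ then Lab.I else Lab.O)⟩

/-- The grammar `TBG` whose start tuple consists of all `TH k₁ k₂ k₃` with
`0 ≤ k₁ ≤ k₂ ≤ k₃ ≤ 3` (indexed, with harmless repetitions, by sorting the
base-4 digits of the index). -/
def TBG : BondingGrammar Lab :=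
  { typ := typLab, N := {Lab.I, Lab.O}, T := {Lab.b}, bond := bondLab,
    k := 64,
    Z := fun i =>
      let a := (i : ℕ) % 4
      let b := ((i : ℕ) / 4) % 4
      let c := (i : ℕ) / 16
      TH (min a (min b c)) (a + b + c - min a (min b c) - max a (max b c))
        (max a (max b c)) }

/-- The hypergraph `⌜G⌝` encoding a simple undirected graph: vertices `0,…,n-1`,
and for each adjacent pair `(u,v)` a `b`-labelled directed edge with attachment
`[u, v]` (so each undirected edge yields two hyperedges, one per direction). -/
def graphToHG (n : ℕ) (adj : Fin n → Fin n → Bool) : BHypergraph Lab :=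
  ⟨Finset.range n,
   (Finset.univ.filter (fun p : Fin n × Fin n => adj p.1 p.2 = true)).image
     (fun p => (p.1 : ℕ) * n + (p.2 : ℕ)),
   fun e => [e / n, e % n],
   fun _ => Lab.b⟩

/-!
Bonding only ever merges an `I`-edge with an `O`-edge into a `b`-edge, so every `b`-edge of the
start union survives, with its attachment, into `⌜G⌝`. The three vertices of a copy of
`TH(k₁,k₂,k₃)` are pairwise joined by `b`-edges, hence form a triangle of `G`, and the copies
partition `V`.

Conversely, given a partition into triangles, cut every edge of `G` running between two
triangles: the directed edge `(u, v)` becomes an `I`-edge at `u` and an `O`-edge at `v`. Each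
triangle then becomes a copy of `TH(k₁,k₂,k₃)`, where `kᵢ` counts the cut edges at its `i`-th
vertex, so `kᵢ ≤ 5 - 2 = 3`; ordering the vertices makes `k₁ ≤ k₂ ≤ k₃`. Bonding the halves of
the cut edges again yields `⌜G⌝`.
-/

open Finset

def pairCode (n : ℕ) (p : Fin n × Fin n) : ℕ := p.1 * n + p.2

section PairCode

variable {n : ℕ}

lemma pairCode_lt (p : Fin n × Fin n) : pairCode n p < n * n :=
  calc (p.1 : ℕ) * n + p.2 < (p.1 + 1) * n := by rw [Nat.succ_mul]; omega
    _ ≤ n * n := Nat.mul_le_mul_right n p.1.isLt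

lemma pairCode_div (p : Fin n × Fin n) : pairCode n p / n = p.1 := by
  rw [pairCode, Nat.add_comm, Nat.add_mul_div_right _ _ (Nat.zero_lt_of_lt p.2.isLt),
    Nat.div_eq_of_lt p.2.isLt, zero_add]

lemma pairCode_mod (p : Fin n × Fin n) : pairCode n p % n = p.2 := by
  rw [pairCode, Nat.add_comm, Nat.add_mul_mod_self_right, Nat.mod_eq_of_lt p.2.isLt]

lemma pairCode_injective : Function.Injective (pairCode n) := fun p q h =>
  Prod.ext (Fin.ext (by rw [← pairCode_div p, h, pairCode_div]))
    (Fin.ext (by rw [← pairCode_mod p, h, pairCode_mod]))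

end PairCode

lemma graphToHG_att_pairCode {n : ℕ} (adj : Fin n → Fin n → Bool) (p : Fin n × Fin n) :
    (graphToHG n adj).att (pairCode n p) = [(p.1 : ℕ), p.2] := by
  simp only [graphToHG, pairCode_div, pairCode_mod]

lemma adj_of_mem_graphToHG {n : ℕ} {adj : Fin n → Fin n → Bool} {e : ℕ}
    (he : e ∈ (graphToHG n adj).E) {u v : Fin n} (hatt : (graphToHG n adj).att e = [(u : ℕ), v]) :
    adj u v = true := by
  obtain ⟨p, hp, rfl⟩ := mem_image.1 he
  rw [show (p.1 : ℕ) * n + p.2 = pairCode n p from rfl, graphToHG_att_pairCode] at hatt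
  simp only [List.cons.injEq, and_true] at hatt
  rw [← Fin.ext hatt.1, ← Fin.ext hatt.2]
  exact (mem_filter.1 hp).2

/-! ### The triangle hypergraphs -/

def pick3 {α : Type} (x y z : α) (s : ℕ) : α :=
  if s = 0 then x else if s = 1 then y else z

@[simp] lemma pick3_zero {α : Type} (x y z : α) : pick3 x y z 0 = x := rfl

@[simp] lemma pick3_one {α : Type} (x y z : α) : pick3 x y z 1 = y := rfl

@[simp] lemma pick3_two {α : Type} (x y z : α) : pick3 x y z 2 = z := rfl

/-- Position of the `b`-edge of `TH` running from vertex `s` to vertex `r`. -/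
def thEdgeIndex (s r : ℕ) : ℕ :=
  if s = 0 ∧ r = 1 then 0 else if s = 1 ∧ r = 0 then 1
  else if s = 1 ∧ r = 2 then 2 else if s = 2 ∧ r = 1 then 3
  else if s = 0 ∧ r = 2 then 4 else 5

lemma thEdgeIndex_lt (s r : ℕ) : thEdgeIndex s r < 6 := by
  unfold thEdgeIndex; split_ifs <;> omega

lemma TH_thEdgeIndex (k₁ k₂ k₃ : ℕ) {s r : ℕ} (hs : s < 3) (hr : r < 3) (hsr : s ≠ r) :
    (TH k₁ k₂ k₃).att (thEdgeIndex s r) = [s, r] ∧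
      (TH k₁ k₂ k₃).lab (thEdgeIndex s r) = .b ∧ thEdgeIndex s r ∈ (TH k₁ k₂ k₃).E := by
  have hE : thEdgeIndex s r ∈ (TH k₁ k₂ k₃).E := by
    have := thEdgeIndex_lt s r
    simp only [TH, mem_range]; omega
  interval_cases s <;> interval_cases r <;> simp_all [thEdgeIndex, TH]

lemma thEdgeIndex_injective {s r s' r' : ℕ} (hs : s < 3) (hr : r < 3) (hs' : s' < 3)
    (hr' : r' < 3) (hsr : s ≠ r) (hsr' : s' ≠ r') (h : thEdgeIndex s r = thEdgeIndex s' r') :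
    s = s' ∧ r = r' := by
  interval_cases s <;> interval_cases r <;> interval_cases s' <;> interval_cases r' <;>
    simp_all [thEdgeIndex]

lemma exists_thEdgeIndex {y : ℕ} (hy : y < 6) :
    ∃ s < 3, ∃ r < 3, s ≠ r ∧ thEdgeIndex s r = y := by
  interval_cases y
  exacts [⟨0, by omega, 1, by omega, by omega, rfl⟩, ⟨1, by omega, 0, by omega, by omega, rfl⟩,
    ⟨1, by omega, 2, by omega, by omega, rfl⟩, ⟨2, by omega, 1, by omega, by omega, rfl⟩,
    ⟨0, by omega, 2, by omega, by omega, rfl⟩, ⟨2, by omega, 0, by omega, by omega, rfl⟩]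

section THBlocks

variable (k : ℕ → ℕ)

/-- Offset, beyond the six `b`-edges, of the `I`/`O`-edges at vertex `s` of `TH`. -/
def thBlockStart (s : ℕ) : ℕ := pick3 0 (2 * k 0) (2 * k 0 + 2 * k 1) s

lemma TH_block {s j : ℕ} (hs : s < 3) (hj : j < 2 * k s) :
    (TH (k 0) (k 1) (k 2)).att (6 + thBlockStart k s + j) = [s] ∧
      (TH (k 0) (k 1) (k 2)).lab (6 + thBlockStart k s + j) =
        (if j < k s then .I else .O) ∧
      6 + thBlockStart k s + j ∈ (TH (k 0) (k 1) (k 2)).E := by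
  interval_cases s <;>
    simp only [TH, thBlockStart, pick3_zero, pick3_one, pick3_two, mem_range] <;>
    refine ⟨?_, ?_, by omega⟩ <;> split_ifs <;> first | rfl | omega

lemma thBlock_injective {s s' j j' : ℕ} (hs : s < 3) (hs' : s' < 3) (hj : j < 2 * k s)
    (hj' : j' < 2 * k s') (h : thBlockStart k s + j = thBlockStart k s' + j') :
    s = s' ∧ j = j' := by
  interval_cases s <;> interval_cases s' <;>
    simp only [thBlockStart, pick3_zero, pick3_one, pick3_two] at h <;> omega

lemma exists_thBlock {y : ℕ} (h6 : 6 ≤ y) (hy : y < 6 + 2 * k 0 + 2 * k 1 + 2 * k 2) :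
    ∃ s < 3, ∃ j < 2 * k s, y = 6 + thBlockStart k s + j := by
  by_cases h0 : y < 6 + 2 * k 0
  · exact ⟨0, by omega, y - 6, by omega, by simp [thBlockStart]; omega⟩
  by_cases h1 : y < 6 + 2 * k 0 + 2 * k 1
  · exact ⟨1, by omega, y - 6 - 2 * k 0, by omega, by simp [thBlockStart]; omega⟩
  · exact ⟨2, by omega, y - 6 - 2 * k 0 - 2 * k 1, by omega, by simp [thBlockStart]; omega⟩

lemma thBlockStart_add_le {s : ℕ} (hs : s < 3) :
    thBlockStart k s + 2 * k s ≤ 2 * k 0 + 2 * k 1 + 2 * k 2 := by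
  interval_cases s <;> simp only [thBlockStart, pick3_zero, pick3_one, pick3_two] <;> omega

end THBlocks

lemma TH_mem_TBG_ZSet {k₁ k₂ k₃ : ℕ} (h₁₂ : k₁ ≤ k₂) (h₂₃ : k₂ ≤ k₃) (h₃ : k₃ ≤ 3) :
    TH k₁ k₂ k₃ ∈ TBG.ZSet := by
  refine ⟨⟨k₁ + 4 * k₂ + 16 * k₃, show _ < 64 by omega⟩, ?_⟩
  have h₁ : (k₁ + 4 * k₂ + 16 * k₃) % 4 = k₁ := by omega
  have h₂ : (k₁ + 4 * k₂ + 16 * k₃) / 4 % 4 = k₂ := by omega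
  have h₃ : (k₁ + 4 * k₂ + 16 * k₃) / 16 = k₃ := by omega
  dsimp only [TBG]
  rw [h₁, h₂, h₃]
  congr 1 <;> omega

/-! ### From a derivation to a partition into triangles -/

lemma bondLab_eq_some {x y t : Lab} (h : bondLab x y = some t) :
    x = .I ∧ y = .O ∧ t = .b := by
  cases x <;> cases y <;> simp_all [bondLab]

def KeepsBEdges (H K : BHypergraph Lab) : Prop :=
  H.V = K.V ∧ ∀ e ∈ H.E, H.lab e = .b → e ∈ K.E ∧ K.att e = H.att e ∧ K.lab e = .b

lemma KeepsBEdges.refl (H : BHypergraph Lab) : KeepsBEdges H H :=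
  ⟨rfl, fun _ he hb => ⟨he, rfl, hb⟩⟩

lemma KeepsBEdges.trans {H K L : BHypergraph Lab} (hHK : KeepsBEdges H K)
    (hKL : KeepsBEdges K L) : KeepsBEdges H L := by
  refine ⟨hHK.1.trans hKL.1, fun e he hb => ?_⟩
  obtain ⟨heK, hattK, hbK⟩ := hHK.2 e he hb
  obtain ⟨heL, hattL, hbL⟩ := hKL.2 e heK hbK
  exact ⟨heL, hattL.trans hattK, hbL⟩

lemma keepsBEdges_of_bondingStep {H K : BHypergraph Lab} (h : BondingStep bondLab H K) :
    KeepsBEdges H K := by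
  obtain ⟨e₁, e₂, e', t, -, -, -, -, hbond, hV, hE, hkeep, -, -⟩ := h
  obtain ⟨hI, hO, -⟩ := bondLab_eq_some hbond
  refine ⟨hV.symm, fun e he hb => ?_⟩
  have hrest : e ∈ H.E \ {e₁, e₂} := by
    simp only [mem_sdiff, mem_insert, mem_singleton, not_or]
    exact ⟨he, by rintro rfl; simp_all, by rintro rfl; simp_all⟩
  obtain ⟨hatt, hlab⟩ := hkeep e hrest
  exact ⟨hE ▸ mem_union_left _ hrest, hatt, hlab.trans hb⟩

lemma keepsBEdges_of_reflTransGen {H K : BHypergraph Lab}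
    (h : Relation.ReflTransGen (BondingStep bondLab) H K) : KeepsBEdges H K := by
  induction h with
  | refl => exact .refl H
  | tail _ hstep ih => exact ih.trans (keepsBEdges_of_bondingStep hstep)

def BHypergraph.part {Λ : Type} (H : BHypergraph Λ) (cV cE : ℕ → ℕ) (i : ℕ) :
    BHypergraph Λ :=
  ⟨H.V.filter (fun v => cV v = i), H.E.filter (fun e => cE e = i), H.att, H.lab⟩

lemma card_V_of_isomorphic_TH {H : BHypergraph Lab} {k₁ k₂ k₃ : ℕ}
    (hiso : H.Isomorphic (TH k₁ k₂ k₃)) : H.V.card = 3 := by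
  obtain ⟨f, -, hf, -⟩ := hiso
  exact hf.finsetCard_eq

lemma exists_bEdge_of_isomorphic_TH {H : BHypergraph Lab} {k₁ k₂ k₃ : ℕ}
    (hH : ∀ e ∈ H.E, ∀ v ∈ H.att e, v ∈ H.V) (hiso : H.Isomorphic (TH k₁ k₂ k₃))
    {x y : ℕ} (hx : x ∈ H.V) (hy : y ∈ H.V) (hxy : x ≠ y) :
    ∃ e ∈ H.E, H.att e = [x, y] ∧ H.lab e = .b := by
  obtain ⟨f, g, hf, hg, hfg⟩ := hiso
  have hf3 : ∀ z ∈ H.V, f z < 3 := fun z hz => by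
    have := hf.mapsTo hz; simp [TH] at this; omega
  obtain ⟨hatt, hlab, hmem⟩ := TH_thEdgeIndex k₁ k₂ k₃ (hf3 x hx) (hf3 y hy)
    (fun h => hxy (hf.injOn hx hy h))
  obtain ⟨e, he, hge⟩ := hg.surjOn hmem
  obtain ⟨hmap, hlab'⟩ := hfg e he
  rw [hge, hatt] at hmap
  obtain ⟨x', y', hxy'⟩ : ∃ x' y', H.att e = [x', y'] := by
    rcases h : H.att e with _ | ⟨a, _ | ⟨b, _ | _⟩⟩ <;> simp [h] at hmap
    exact ⟨a, b, rfl⟩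
  rw [hxy', List.map_cons, List.map_cons, List.map_nil] at hmap
  simp only [List.cons.injEq, and_true] at hmap
  have hx' : x' ∈ H.V := hH e he x' (by simp [hxy'])
  have hy' : y' ∈ H.V := hH e he y' (by simp [hxy'])
  refine ⟨e, he, ?_, by rw [← hlab', hge, hlab]⟩
  rw [hxy', hf.injOn hx' hx hmap.1.symm, hf.injOn hy' hy hmap.2.symm]

lemma triPart_of_classes {n : ℕ} {adj : Fin n → Fin n → Bool} (c : Fin n → ℕ)
    (hcard : ∀ v, (univ.filter fun u => c u = c v).card = 3)
    (hadj : ∀ u v, c u = c v → u ≠ v → adj u v = true) : TriPart adj := by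
  refine ⟨univ.image fun v => univ.filter fun u => c u = c v, ?_, fun v => ?_⟩
  · simp only [mem_image, mem_univ, true_and, forall_exists_index, forall_apply_eq_imp_iff]
    refine fun v => ⟨hcard v, fun u hu w hw huw => hadj u w ?_ huw⟩
    rw [(mem_filter.1 hu).2, (mem_filter.1 hw).2]
  · refine ⟨univ.filter fun u => c u = c v, ⟨mem_image_of_mem _ (mem_univ v), by simp⟩, ?_⟩
    rintro t ⟨ht, hvt⟩
    obtain ⟨w, -, rfl⟩ := mem_image.1 ht
    rw [(mem_filter.1 hvt).2]

lemma card_filter_univ_fin_eq {n : ℕ} (c : ℕ → ℕ) (i : ℕ) :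
    (univ.filter fun u : Fin n => c u = i).card = ((range n).filter fun v => c v = i).card :=
  card_nbij Fin.val (fun u hu => by simp_all) Fin.val_injective.injOn
    (fun v hv => by simp_all; exact ⟨⟨v, hv.1⟩, by simp [hv.2], rfl⟩)

lemma triPart_of_generates {n : ℕ} {adj : Fin n → Fin n → Bool}
    (h : TBG.Generates (graphToHG n adj)) : TriPart adj := by
  obtain ⟨H₀, ⟨m, cV, cE, hcV, -, hattV, hattC, hcopy⟩, hchain⟩ := h
  obtain ⟨hV, hkeep⟩ := keepsBEdges_of_reflTransGen hchain
  have hpart : ∀ v : Fin n, ∃ k₁ k₂ k₃, (H₀.part cV cE (cV v)).Isomorphic (TH k₁ k₂ k₃) :=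
    fun v => by
      obtain ⟨_, ⟨j, rfl⟩, hiso⟩ := hcopy (cV v) (hcV v (by rw [hV]; simp [graphToHG]))
      exact ⟨_, _, _, hiso⟩
  have hpartV : ∀ i, (H₀.part cV cE i).V = (range n).filter fun v => cV v = i := fun i => by
    rw [BHypergraph.part, hV]; rfl
  refine triPart_of_classes (fun v => cV v) (fun v => ?_) (fun u v huv hne => ?_)
  · obtain ⟨k₁, k₂, k₃, hiso⟩ := hpart v
    rw [card_filter_univ_fin_eq, ← hpartV, card_V_of_isomorphic_TH hiso]
  · obtain ⟨k₁, k₂, k₃, hiso⟩ := hpart v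
    have hwf : ∀ e ∈ (H₀.part cV cE (cV v)).E, ∀ w ∈ H₀.att e, w ∈ (H₀.part cV cE (cV v)).V :=
      fun e he w hw => by
        obtain ⟨he, hce⟩ := mem_filter.1 he
        exact mem_filter.2 ⟨hattV e he w hw, (hattC e he w hw).trans hce⟩
    obtain ⟨e, he, hatt, hlab⟩ := exists_bEdge_of_isomorphic_TH hwf hiso
      (by rw [hpartV]; simp [huv]) (by rw [hpartV]; simp) (Fin.val_injective.ne hne)
    obtain ⟨heG, hattG, -⟩ := hkeep e (mem_filter.1 he).1 hlab
    exact adj_of_mem_graphToHG heG (hattG.trans hatt)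

/-! ### Cutting the edges between triangles -/

section Cut

variable {n : ℕ} (adj : Fin n → Fin n → Bool)

def bEdges (S : Finset (Fin n × Fin n)) : Finset ℕ :=
  (univ.filter fun p : Fin n × Fin n => adj p.1 p.2 = true ∧ p ∉ S).image (pairCode n)

def iEdges (S : Finset (Fin n × Fin n)) : Finset ℕ :=
  S.image fun p => n * n + 2 * pairCode n p

def oEdges (S : Finset (Fin n × Fin n)) : Finset ℕ :=
  S.image fun p => n * n + 2 * pairCode n p + 1

def cutAtt (S : Finset (Fin n × Fin n)) (e : ℕ) : List ℕ :=
  if e ∈ iEdges S then [(e - n * n) / 2 / n]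
  else if e ∈ oEdges S then [(e - n * n) / 2 % n]
  else [e / n, e % n]

def cutLab (S : Finset (Fin n × Fin n)) (e : ℕ) : Lab :=
  if e ∈ iEdges S then .I else if e ∈ oEdges S then .O else .b

/-- `⌜G⌝` with every directed edge `p ∈ S` cut into an `I`-edge at `p.1` and an `O`-edge
at `p.2`. The `b`-edges keep their numbers `pairCode n p` from `⌜G⌝`; the two halves of `p` are
numbered `n * n + 2 * pairCode n p` and the odd number after it. -/
def cutHG (S : Finset (Fin n × Fin n)) : BHypergraph Lab :=
  ⟨range n, bEdges adj S ∪ iEdges S ∪ oEdges S, cutAtt S, cutLab S⟩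

variable {adj} {S : Finset (Fin n × Fin n)} {e : ℕ}

lemma mem_bEdges : e ∈ bEdges adj S ↔ ∃ p, adj p.1 p.2 = true ∧ p ∉ S ∧ pairCode n p = e := by
  simp [bEdges, and_assoc]

lemma mem_iEdges : e ∈ iEdges S ↔ ∃ p ∈ S, n * n + 2 * pairCode n p = e := by
  simp [iEdges]

lemma mem_oEdges : e ∈ oEdges S ↔ ∃ p ∈ S, n * n + 2 * pairCode n p + 1 = e := by
  simp [oEdges]

lemma mem_cutHG_E : e ∈ (cutHG adj S).E ↔ e ∈ bEdges adj S ∨ e ∈ iEdges S ∨ e ∈ oEdges S := by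
  simp only [cutHG, mem_union, or_assoc]

lemma lt_of_mem_bEdges (h : e ∈ bEdges adj S) : e < n * n := by
  obtain ⟨p, -, -, rfl⟩ := mem_bEdges.1 h
  exact pairCode_lt p

lemma even_of_mem_iEdges (h : e ∈ iEdges S) : n * n ≤ e ∧ (e - n * n) % 2 = 0 := by
  obtain ⟨p, -, rfl⟩ := mem_iEdges.1 h
  omega

lemma odd_of_mem_oEdges (h : e ∈ oEdges S) : n * n ≤ e ∧ (e - n * n) % 2 = 1 := by
  obtain ⟨p, -, rfl⟩ := mem_oEdges.1 h
  omega

lemma pairCode_notMem_iEdges (p : Fin n × Fin n) : pairCode n p ∉ iEdges S := fun h => by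
  have := even_of_mem_iEdges h; have := pairCode_lt p; omega

lemma pairCode_notMem_oEdges (p : Fin n × Fin n) : pairCode n p ∉ oEdges S := fun h => by
  have := odd_of_mem_oEdges h; have := pairCode_lt p; omega

lemma cutAtt_pairCode (p : Fin n × Fin n) : cutAtt S (pairCode n p) = [(p.1 : ℕ), p.2] := by
  simp only [cutAtt, if_neg (pairCode_notMem_iEdges p), if_neg (pairCode_notMem_oEdges p),
    pairCode_div, pairCode_mod]

lemma cutLab_pairCode (p : Fin n × Fin n) : cutLab S (pairCode n p) = .b := by
  simp only [cutLab, if_neg (pairCode_notMem_iEdges p), if_neg (pairCode_notMem_oEdges p)]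

lemma cutAtt_iEdge {p : Fin n × Fin n} (hp : p ∈ S) :
    cutAtt S (n * n + 2 * pairCode n p) = [(p.1 : ℕ)] := by
  rw [cutAtt, if_pos (mem_iEdges.2 ⟨p, hp, rfl⟩), Nat.add_sub_cancel_left,
    Nat.mul_div_cancel_left _ two_pos, pairCode_div]

lemma cutLab_iEdge {p : Fin n × Fin n} (hp : p ∈ S) :
    cutLab S (n * n + 2 * pairCode n p) = .I :=
  if_pos (mem_iEdges.2 ⟨p, hp, rfl⟩)

lemma oEdge_notMem_iEdges (p : Fin n × Fin n) :
    n * n + 2 * pairCode n p + 1 ∉ iEdges S := fun h => by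
  have := even_of_mem_iEdges h; omega

lemma cutAtt_oEdge {p : Fin n × Fin n} (hp : p ∈ S) :
    cutAtt S (n * n + 2 * pairCode n p + 1) = [(p.2 : ℕ)] := by
  rw [cutAtt, if_neg (oEdge_notMem_iEdges p), if_pos (mem_oEdges.2 ⟨p, hp, rfl⟩),
    show n * n + 2 * pairCode n p + 1 - n * n = 2 * pairCode n p + 1 by omega,
    show (2 * pairCode n p + 1) / 2 = pairCode n p by omega, pairCode_mod]

lemma cutLab_oEdge {p : Fin n × Fin n} (hp : p ∈ S) :
    cutLab S (n * n + 2 * pairCode n p + 1) = .O := by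
  rw [cutLab, if_neg (oEdge_notMem_iEdges p), if_pos (mem_oEdges.2 ⟨p, hp, rfl⟩)]

variable (adj) in
lemma cutHG_empty : cutHG adj ∅ = graphToHG n adj := by
  simp only [cutHG, graphToHG, BHypergraph.mk.injEq]
  refine ⟨trivial, ?_, ?_, ?_⟩
  · ext e; simp [bEdges, iEdges, oEdges, pairCode]
  · funext e; simp [cutAtt, iEdges, oEdges]
  · funext e; simp [cutLab, iEdges, oEdges]

section Erase

variable {p : Fin n × Fin n}

lemma mem_iEdges_erase :
    e ∈ iEdges (S.erase p) ↔ e ∈ iEdges S ∧ e ≠ n * n + 2 * pairCode n p := by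
  simp only [mem_iEdges, mem_erase]
  constructor
  · rintro ⟨q, ⟨hqp, hq⟩, rfl⟩
    exact ⟨⟨q, hq, rfl⟩, fun h => hqp (pairCode_injective (by omega))⟩
  · rintro ⟨⟨q, hq, rfl⟩, hne⟩
    exact ⟨q, ⟨by rintro rfl; exact hne rfl, hq⟩, rfl⟩

lemma mem_oEdges_erase :
    e ∈ oEdges (S.erase p) ↔ e ∈ oEdges S ∧ e ≠ n * n + 2 * pairCode n p + 1 := by
  simp only [mem_oEdges, mem_erase]
  constructor
  · rintro ⟨q, ⟨hqp, hq⟩, rfl⟩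
    exact ⟨⟨q, hq, rfl⟩, fun h => hqp (pairCode_injective (by omega))⟩
  · rintro ⟨⟨q, hq, rfl⟩, hne⟩
    exact ⟨q, ⟨by rintro rfl; exact hne rfl, hq⟩, rfl⟩

lemma mem_bEdges_erase (hadj : adj p.1 p.2 = true) :
    e ∈ bEdges adj (S.erase p) ↔ e ∈ bEdges adj S ∨ e = pairCode n p := by
  simp only [mem_bEdges, mem_erase, not_and_or, not_not]
  constructor
  · rintro ⟨q, hq, hqS | hqS, rfl⟩
    · exact Or.inr (by rw [hqS])
    · exact Or.inl ⟨q, hq, hqS, rfl⟩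
  · rintro (⟨q, hq, hqS, rfl⟩ | rfl)
    · exact ⟨q, hq, Or.inr hqS, rfl⟩
    · exact ⟨p, hadj, Or.inl rfl, rfl⟩

lemma cutHG_erase_E (hadj : adj p.1 p.2 = true) :
    (cutHG adj (S.erase p)).E = ((cutHG adj S).E \
      {n * n + 2 * pairCode n p, n * n + 2 * pairCode n p + 1}) ∪ {pairCode n p} := by
  ext x
  have hb := @lt_of_mem_bEdges n adj S x
  have hi := @even_of_mem_iEdges n S x
  have ho := @odd_of_mem_oEdges n S x
  simp only [mem_union, mem_sdiff, mem_insert, mem_singleton, mem_cutHG_E,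
    mem_bEdges_erase hadj, mem_iEdges_erase, mem_oEdges_erase]
  have := pairCode_lt p
  constructor
  · rintro ((hx | rfl) | ⟨hx, hne⟩ | ⟨hx, hne⟩)
    · exact Or.inl ⟨Or.inl hx, by have := hb hx; omega⟩
    · exact Or.inr rfl
    · exact Or.inl ⟨Or.inr (Or.inl hx), by have := hi hx; omega⟩
    · exact Or.inl ⟨Or.inr (Or.inr hx), by have := ho hx; omega⟩
  · rintro (⟨hx | hx | hx, hne⟩ | rfl)
    · exact Or.inl (Or.inl hx)
    · exact Or.inr (Or.inl ⟨hx, fun h => hne (Or.inl h)⟩)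
    · exact Or.inr (Or.inr ⟨hx, fun h => hne (Or.inr h)⟩)
    · exact Or.inl (Or.inr rfl)

lemma cutAtt_erase (he₁ : e ≠ n * n + 2 * pairCode n p)
    (he₂ : e ≠ n * n + 2 * pairCode n p + 1) :
    cutAtt (S.erase p) e = cutAtt S e ∧ cutLab (S.erase p) e = cutLab S e := by
  simp only [cutAtt, cutLab, mem_iEdges_erase, mem_oEdges_erase, ne_eq, he₁, he₂,
    not_false_eq_true, and_true]

lemma bondingStep_cutHG_erase (hp : p ∈ S) (hadj : adj p.1 p.2 = true) :
    BondingStep bondLab (cutHG adj S) (cutHG adj (S.erase p)) := by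
  have hi : n * n + 2 * pairCode n p ∈ iEdges S := mem_iEdges.2 ⟨p, hp, rfl⟩
  have ho : n * n + 2 * pairCode n p + 1 ∈ oEdges S := mem_oEdges.2 ⟨p, hp, rfl⟩
  refine ⟨_, _, pairCode n p, .b, mem_cutHG_E.2 (Or.inr (Or.inl hi)),
    mem_cutHG_E.2 (Or.inr (Or.inr ho)), by omega, ?_, ?_, rfl, cutHG_erase_E hadj,
    fun e he => ?_, ?_, cutLab_pairCode p⟩
  · simp only [mem_cutHG_E, mem_bEdges, pairCode_notMem_iEdges, pairCode_notMem_oEdges,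
      or_false, not_exists, not_and]
    exact fun q _ hq hqp => hq (pairCode_injective hqp ▸ hp)
  · change bondLab (cutLab S _) (cutLab S _) = _
    rw [cutLab_iEdge hp, cutLab_oEdge hp]; rfl
  · simp only [mem_sdiff, mem_insert, mem_singleton, not_or] at he
    exact cutAtt_erase he.2.1 he.2.2
  · change cutAtt _ _ = cutAtt S _ ++ cutAtt S _
    rw [cutAtt_pairCode, cutAtt_iEdge hp, cutAtt_oEdge hp]; rfl

end Erase

lemma reflTransGen_cutHG (hS : ∀ p ∈ S, adj p.1 p.2 = true) :
    Relation.ReflTransGen (BondingStep bondLab) (cutHG adj S) (graphToHG n adj) := by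
  induction S using Finset.strongInduction with
  | _ S ih =>
    rcases S.eq_empty_or_nonempty with rfl | ⟨p, hp⟩
    · rw [cutHG_empty]
    · exact .head (bondingStep_cutHG_erase hp (hS p hp))
        (ih _ (erase_ssubset hp) fun q hq => hS q (mem_of_mem_erase hq))

end Cut

/-- The vertex whose copy of `TH` an edge of `cutHG` belongs to: the source of a `b`- or
`I`-edge, the target of an `O`-edge. -/
def cutOwner (n e : ℕ) : ℕ :=
  if e < n * n then e / n
  else if (e - n * n) % 2 = 0 then (e - n * n) / 2 / n else (e - n * n) / 2 % n

section CutOwner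

variable {n : ℕ} (p : Fin n × Fin n)

lemma cutOwner_pairCode : cutOwner n (pairCode n p) = p.1 := by
  rw [cutOwner, if_pos (pairCode_lt p), pairCode_div]

lemma cutOwner_iEdge : cutOwner n (n * n + 2 * pairCode n p) = p.1 := by
  rw [cutOwner, if_neg (by omega), Nat.add_sub_cancel_left, if_pos (by omega),
    Nat.mul_div_cancel_left _ two_pos, pairCode_div]

lemma cutOwner_oEdge : cutOwner n (n * n + 2 * pairCode n p + 1) = p.2 := by
  rw [cutOwner, if_neg (by omega), show n * n + 2 * pairCode n p + 1 - n * n =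
      2 * pairCode n p + 1 by omega, if_neg (by omega),
    show (2 * pairCode n p + 1) / 2 = pairCode n p by omega, pairCode_mod]

end CutOwner

lemma cutOwner_mem_cutAtt {n : ℕ} {adj : Fin n → Fin n → Bool} {S : Finset (Fin n × Fin n)}
    {e : ℕ} (he : e ∈ (cutHG adj S).E) : cutOwner n e ∈ cutAtt S e := by
  rcases mem_cutHG_E.1 he with hb | hi | ho
  · obtain ⟨p, -, -, rfl⟩ := mem_bEdges.1 hb
    simp [cutOwner_pairCode, cutAtt_pairCode]
  · obtain ⟨p, hp, rfl⟩ := mem_iEdges.1 hi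
    simp [cutOwner_iEdge, cutAtt_iEdge hp]
  · obtain ⟨p, hp, rfl⟩ := mem_oEdges.1 ho
    simp [cutOwner_oEdge, cutAtt_oEdge hp]

/-! ### Each triangle is a copy of `TH` -/

section OutList

variable {n : ℕ} (D : Finset (Fin n × Fin n))

def outList (v : Fin n) : List ℕ :=
  ((univ.filter fun w : Fin n => (v, w) ∈ D).image Fin.val).sort (· ≤ ·)

def outDeg (v : Fin n) : ℕ := (outList D v).length

variable {D}

lemma outDeg_eq_card (v : Fin n) : outDeg D v = (univ.filter fun w : Fin n => (v, w) ∈ D).card := by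
  rw [outDeg, outList, length_sort, card_image_of_injective _ Fin.val_injective]

lemma mem_outList {v w : Fin n} : (w : ℕ) ∈ outList D v ↔ (v, w) ∈ D := by
  simp [outList, Fin.val_inj]

lemma exists_of_mem_outList {v : Fin n} {x : ℕ} (h : x ∈ outList D v) :
    ∃ w : Fin n, (v, w) ∈ D ∧ (w : ℕ) = x := by
  simp only [outList, mem_sort, mem_image, mem_filter, mem_univ, true_and] at h
  exact h

lemma idxOf_outList_lt {v w : Fin n} (h : (v, w) ∈ D) : (outList D v).idxOf (w : ℕ) < outDeg D v :=
  List.idxOf_lt_length_iff.2 (mem_outList.2 h)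

lemma outList_idxOf_injective {v w w' : Fin n} (h : (v, w) ∈ D)
    (hww' : (outList D v).idxOf (w : ℕ) = (outList D v).idxOf (w' : ℕ)) : w = w' :=
  Fin.ext ((List.idxOf_inj (mem_outList.2 h)).1 hww')

lemma exists_idxOf_outList {v : Fin n} {j : ℕ} (hj : j < outDeg D v) :
    ∃ w : Fin n, (v, w) ∈ D ∧ (outList D v).idxOf (w : ℕ) = j := by
  obtain ⟨w, hw, hwj⟩ := exists_of_mem_outList (List.getElem_mem hj)
  refine ⟨w, hw, ?_⟩
  rw [hwj]
  exact List.get_idxOf (sort_nodup _ _) ⟨j, hj⟩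

end OutList

section Triangle

variable {n : ℕ} (D : Finset (Fin n × Fin n)) (v : ℕ → Fin n)

def pos3 (x : ℕ) : ℕ := if x = v 0 then 0 else if x = v 1 then 1 else 2

/-- The `TH`-edge matched with an edge of `cutHG adj D` at the triangle `v 0, v 1, v 2`:
`b`-edges go by `thEdgeIndex`, and the `I`-edges, then the `O`-edges, at `v s` fill the block
of `s`, in the order of `outList`. -/
def toTHEdge (e : ℕ) : ℕ :=
  if e < n * n then thEdgeIndex (pos3 v (e / n)) (pos3 v (e % n))
  else if (e - n * n) % 2 = 0 then
    6 + thBlockStart (outDeg D ∘ v) (pos3 v ((e - n * n) / 2 / n))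
      + (outList D (v (pos3 v ((e - n * n) / 2 / n)))).idxOf ((e - n * n) / 2 % n)
  else
    6 + thBlockStart (outDeg D ∘ v) (pos3 v ((e - n * n) / 2 % n))
      + outDeg D (v (pos3 v ((e - n * n) / 2 % n)))
      + (outList D (v (pos3 v ((e - n * n) / 2 % n)))).idxOf ((e - n * n) / 2 / n)

def TriEdge (e : ℕ) : Prop :=
  (∃ s < 3, ∃ r < 3, s ≠ r ∧ e = pairCode n (v s, v r)) ∨
  (∃ s < 3, ∃ w, (v s, w) ∈ D ∧ e = n * n + 2 * pairCode n (v s, w)) ∨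
  (∃ s < 3, ∃ w, (w, v s) ∈ D ∧ e = n * n + 2 * pairCode n (w, v s) + 1)

variable {D v} (hv : ∀ s < 3, ∀ r < 3, v s = v r → s = r)
include hv

lemma pos3_apply {s : ℕ} (hs : s < 3) : pos3 v (v s) = s := by
  have hne : ∀ s < 3, ∀ r < 3, s ≠ r → (v s : ℕ) ≠ v r :=
    fun s hs r hr hsr h => hsr (hv s hs r hr (Fin.ext h))
  interval_cases s <;>
    simp [pos3, hne 1 (by omega) 0 (by omega), hne 2 (by omega) 0 (by omega),
      hne 2 (by omega) 1 (by omega)]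

lemma bijOn_pos3 (k₁ k₂ k₃ : ℕ) :
    Set.BijOn (pos3 v) ({(v 0 : ℕ), (v 1 : ℕ), (v 2 : ℕ)} : Finset ℕ) (TH k₁ k₂ k₃).V := by
  have hp := fun s hs => pos3_apply hv (s := s) hs
  refine ⟨?_, ?_, ?_⟩
  · intro x hx
    simp only [coe_insert, coe_singleton, Set.mem_insert_iff, Set.mem_singleton_iff] at hx
    rcases hx with rfl | rfl | rfl <;> simp [TH, hp]
  · intro x hx y hy hxy
    simp only [coe_insert, coe_singleton, Set.mem_insert_iff, Set.mem_singleton_iff] at hx hy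
    rcases hx with rfl | rfl | rfl <;> rcases hy with rfl | rfl | rfl <;> simp_all
  · intro y hy
    simp only [TH, coe_insert, coe_singleton, Set.mem_insert_iff, Set.mem_singleton_iff] at hy
    rcases hy with rfl | rfl | rfl
    exacts [⟨v 0, by simp, hp 0 (by omega)⟩, ⟨v 1, by simp, hp 1 (by omega)⟩,
      ⟨v 2, by simp, hp 2 (by omega)⟩]

lemma toTHEdge_pairCode {s r : ℕ} (hs : s < 3) (hr : r < 3) :
    toTHEdge D v (pairCode n (v s, v r)) = thEdgeIndex s r := by
  rw [toTHEdge, if_pos (pairCode_lt _), pairCode_div, pairCode_mod, pos3_apply hv hs,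
    pos3_apply hv hr]

lemma toTHEdge_iEdge {s : ℕ} (hs : s < 3) (w : Fin n) :
    toTHEdge D v (n * n + 2 * pairCode n (v s, w)) =
      6 + thBlockStart (outDeg D ∘ v) s + (outList D (v s)).idxOf (w : ℕ) := by
  rw [toTHEdge, if_neg (by omega), Nat.add_sub_cancel_left, if_pos (by omega),
    Nat.mul_div_cancel_left _ two_pos, pairCode_div, pairCode_mod, pos3_apply hv hs]

lemma toTHEdge_oEdge {s : ℕ} (hs : s < 3) (w : Fin n) :
    toTHEdge D v (n * n + 2 * pairCode n (w, v s) + 1) =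
      6 + thBlockStart (outDeg D ∘ v) s + outDeg D (v s) + (outList D (v s)).idxOf (w : ℕ) := by
  rw [toTHEdge, if_neg (by omega), show n * n + 2 * pairCode n (w, v s) + 1 - n * n =
      2 * pairCode n (w, v s) + 1 by omega, if_neg (by omega),
    show (2 * pairCode n (w, v s) + 1) / 2 = pairCode n (w, v s) by omega,
    pairCode_div, pairCode_mod, pos3_apply hv hs]

lemma mapsTo_toTHEdge (hD : ∀ x y, (x, y) ∈ D → (y, x) ∈ D) :
    Set.MapsTo (toTHEdge D v) {e | TriEdge D v e}
      (TH (outDeg D (v 0)) (outDeg D (v 1)) (outDeg D (v 2))).E := by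
  rintro e (⟨s, hs, r, hr, -, rfl⟩ | ⟨s, hs, w, hw, rfl⟩ | ⟨s, hs, w, hw, rfl⟩) <;>
    simp only [TH, coe_range, Set.mem_Iio]
  · have := thEdgeIndex_lt s r
    rw [toTHEdge_pairCode hv hs hr]; omega
  all_goals
    have hblock := thBlockStart_add_le (outDeg D ∘ v) hs
    simp only [Function.comp_apply] at hblock
  · have := idxOf_outList_lt hw
    rw [toTHEdge_iEdge hv hs]; omega
  · have := idxOf_outList_lt (hD _ _ hw)
    rw [toTHEdge_oEdge hv hs]; omega

lemma injOn_toTHEdge (hD : ∀ x y, (x, y) ∈ D → (y, x) ∈ D) :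
    Set.InjOn (toTHEdge D v) {e | TriEdge D v e} := by
  have hblock := fun {s s' j j'} => @thBlock_injective (outDeg D ∘ v) s s' j j'
  simp only [Function.comp_apply] at hblock
  have hI : ∀ {s w}, (v s, w) ∈ D → (outList D (v s)).idxOf (w : ℕ) < 2 * outDeg D (v s) :=
    fun hw => by have := idxOf_outList_lt hw; omega
  have hO : ∀ {s w}, (w, v s) ∈ D →
      outDeg D (v s) + (outList D (v s)).idxOf (w : ℕ) < 2 * outDeg D (v s) :=
    fun hw => by have := idxOf_outList_lt (hD _ _ hw); omega
  rintro e (⟨s, hs, r, hr, hsr, rfl⟩ | ⟨s, hs, w, hw, rfl⟩ | ⟨s, hs, w, hw, rfl⟩) e'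
    (⟨s', hs', r', hr', hsr', rfl⟩ | ⟨s', hs', w', hw', rfl⟩ | ⟨s', hs', w', hw', rfl⟩) h <;>
    simp (disch := assumption) only [toTHEdge_pairCode hv, toTHEdge_iEdge hv,
      toTHEdge_oEdge hv] at h
  · obtain ⟨rfl, rfl⟩ := thEdgeIndex_injective hs hr hs' hr' hsr hsr' h
    rfl
  any_goals (have := thEdgeIndex_lt s r; omega)
  any_goals (have := thEdgeIndex_lt s' r'; omega)
  · obtain ⟨rfl, hj⟩ := hblock hs hs' (hI hw) (hI hw') (by omega)
    rw [outList_idxOf_injective hw hj]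
  · obtain ⟨rfl, hj⟩ := hblock hs hs' (hI hw) (hO hw') (by omega)
    have := idxOf_outList_lt hw
    omega
  · obtain ⟨rfl, hj⟩ := hblock hs hs' (hO hw) (hI hw') (by omega)
    have := idxOf_outList_lt hw'
    omega
  · obtain ⟨rfl, hj⟩ := hblock hs hs' (hO hw) (hO hw') (by omega)
    rw [outList_idxOf_injective (hD _ _ hw) (Nat.add_left_cancel hj)]

lemma surjOn_toTHEdge (hD : ∀ x y, (x, y) ∈ D → (y, x) ∈ D) :
    Set.SurjOn (toTHEdge D v) {e | TriEdge D v e}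
      (TH (outDeg D (v 0)) (outDeg D (v 1)) (outDeg D (v 2))).E := by
  intro y hy
  simp only [TH, coe_range, Set.mem_Iio] at hy
  by_cases h6 : y < 6
  · obtain ⟨s, hs, r, hr, hsr, rfl⟩ := exists_thEdgeIndex h6
    exact ⟨_, Or.inl ⟨s, hs, r, hr, hsr, rfl⟩, toTHEdge_pairCode hv hs hr⟩
  obtain ⟨s, hs, j, hj, rfl⟩ := exists_thBlock (outDeg D ∘ v) (by omega) hy
  simp only [Function.comp_apply] at hj
  by_cases hjI : j < outDeg D (v s)
  · obtain ⟨w, hw, rfl⟩ := exists_idxOf_outList hjI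
    exact ⟨_, Or.inr (Or.inl ⟨s, hs, w, hw, rfl⟩), toTHEdge_iEdge hv hs w⟩
  · obtain ⟨w, hw, hwj⟩ :=
      exists_idxOf_outList (D := D) (v := v s) (j := j - outDeg D (v s)) (by omega)
    refine ⟨_, Or.inr (Or.inr ⟨s, hs, w, hD _ _ hw, rfl⟩), ?_⟩
    rw [toTHEdge_oEdge hv hs w, hwj]
    omega

lemma TH_toTHEdge (hD : ∀ x y, (x, y) ∈ D → (y, x) ∈ D) {e : ℕ} (he : TriEdge D v e) :
    (TH (outDeg D (v 0)) (outDeg D (v 1)) (outDeg D (v 2))).att (toTHEdge D v e) =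
        (cutAtt D e).map (pos3 v) ∧
      (TH (outDeg D (v 0)) (outDeg D (v 1)) (outDeg D (v 2))).lab (toTHEdge D v e) =
        cutLab D e := by
  rcases he with ⟨s, hs, r, hr, hsr, rfl⟩ | ⟨s, hs, w, hw, rfl⟩ | ⟨s, hs, w, hw, rfl⟩
  · obtain ⟨hatt, hlab, -⟩ := TH_thEdgeIndex (outDeg D (v 0)) (outDeg D (v 1)) (outDeg D (v 2))
      hs hr hsr
    rw [toTHEdge_pairCode hv hs hr, hatt, hlab, cutAtt_pairCode, cutLab_pairCode]
    simp [pos3_apply hv hs, pos3_apply hv hr]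
  · have hj := idxOf_outList_lt hw
    obtain ⟨hatt, hlab, -⟩ := TH_block (outDeg D ∘ v) hs
      (j := (outList D (v s)).idxOf (w : ℕ)) (by simp only [Function.comp_apply]; omega)
    simp only [Function.comp_apply] at hatt hlab
    rw [toTHEdge_iEdge hv hs, hatt, hlab, if_pos hj, cutAtt_iEdge hw, cutLab_iEdge hw]
    simp [pos3_apply hv hs]
  · have hj := idxOf_outList_lt (hD _ _ hw)
    obtain ⟨hatt, hlab, -⟩ := TH_block (outDeg D ∘ v) hs
      (j := outDeg D (v s) + (outList D (v s)).idxOf (w : ℕ))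
      (by simp only [Function.comp_apply]; omega)
    simp only [Function.comp_apply, ← add_assoc] at hatt hlab
    rw [toTHEdge_oEdge hv hs, hatt, hlab, if_neg (by omega), cutAtt_oEdge hw, cutLab_oEdge hw]
    simp [pos3_apply hv hs]

lemma isomorphic_TH_of_triEdge (hD : ∀ x y, (x, y) ∈ D → (y, x) ∈ D) {Vf Ef : Finset ℕ}
    (hVf : Vf = {(v 0 : ℕ), (v 1 : ℕ), (v 2 : ℕ)}) (hEf : ∀ e, e ∈ Ef ↔ TriEdge D v e) :
    BHypergraph.Isomorphic ⟨Vf, Ef, cutAtt D, cutLab D⟩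
      (TH (outDeg D (v 0)) (outDeg D (v 1)) (outDeg D (v 2))) := by
  have hEf' : (Ef : Set ℕ) = {e | TriEdge D v e} := Set.ext hEf
  subst hVf
  refine ⟨pos3 v, toTHEdge D v, bijOn_pos3 hv _ _ _, ?_,
    fun e he => TH_toTHEdge hv hD ((hEf e).1 he)⟩
  change Set.BijOn _ (Ef : Set ℕ) _
  rw [hEf']
  exact ⟨mapsTo_toTHEdge hv hD, injOn_toTHEdge hv hD, surjOn_toTHEdge hv hD⟩

end Triangle

/-! ### From a partition into triangles to a derivation -/

section Labelling

variable {n : ℕ} (adj : Fin n → Fin n → Bool)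

structure IsTriangleLabelling (m : ℕ) (c : Fin n → ℕ) : Prop where
  lt : ∀ v, c v < m
  surj : ∀ i < m, ∃ v, c v = i
  card : ∀ v, (univ.filter fun u => c u = c v).card = 3
  adj : ∀ u v, c u = c v → u ≠ v → adj u v = true

variable {adj}

lemma exists_isTriangleLabelling (h : TriPart adj) : ∃ m c, IsTriangleLabelling adj m c := by
  obtain ⟨P, hP, huniq⟩ := h
  choose T hT hTuniq using huniq
  have hTeq : ∀ u v, u ∈ T v ↔ T u = T v := fun u v =>
    ⟨fun hu => (hTuniq u _ ⟨(hT v).1, hu⟩).symm, fun h => h ▸ (hT u).2⟩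
  have hidx : ∀ u v, P.toList.idxOf (T u) = P.toList.idxOf (T v) ↔ T u = T v := fun u v =>
    List.idxOf_inj (mem_toList.2 (hT u).1)
  refine ⟨P.card, fun v => P.toList.idxOf (T v), ⟨fun v => ?_, fun i hi => ?_, fun v => ?_,
    fun u v huv hne => ?_⟩⟩
  · rw [← length_toList]
    exact List.idxOf_lt_length_iff.2 (mem_toList.2 (hT v).1)
  · rw [← length_toList] at hi
    have ht := (hP _ (mem_toList.1 (List.getElem_mem hi)))
    obtain ⟨v, hv⟩ := card_pos.1 (by omega : 0 < (P.toList[i]).card)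
    refine ⟨v, ?_⟩
    rw [← hTuniq v _ ⟨mem_toList.1 (List.getElem_mem hi), hv⟩]
    exact List.get_idxOf (nodup_toList P) ⟨i, hi⟩
  · simp only [hidx, ← hTeq]
    rw [filter_mem_eq_inter, univ_inter]
    exact (hP _ (hT v).1).1
  · rw [hidx] at huv
    exact (hP _ (hT v).1).2 u (by rw [hTeq, huv]) v (hT v).2 hne

end Labelling

lemma exists_sorted_triple {α : Type} [DecidableEq α] (f : α → ℕ) {t : Finset α}
    (ht : t.card = 3) :
    ∃ a b c, a ≠ b ∧ a ≠ c ∧ b ≠ c ∧ t = {a, b, c} ∧ f a ≤ f b ∧ f b ≤ f c := by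
  obtain ⟨a, b, c, hab, hac, hbc, rfl⟩ := card_eq_three.1 ht
  rcases le_total (f a) (f b) with h1 | h1 <;> rcases le_total (f b) (f c) with h2 | h2 <;>
    rcases le_total (f a) (f c) with h3 | h3
  · exact ⟨a, b, c, hab, hac, hbc, rfl, h1, h2⟩
  · exact ⟨a, b, c, hab, hac, hbc, rfl, h1, h2⟩
  · exact ⟨a, c, b, hac, hab, hbc.symm, by ext x; simp; tauto, h3, h2⟩
  · exact ⟨c, a, b, hac.symm, hbc.symm, hab, by ext x; simp; tauto, h3, h1⟩
  · exact ⟨b, a, c, hab.symm, hbc, hac, by ext x; simp; tauto, h1, h3⟩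
  · exact ⟨b, c, a, hbc, hab.symm, hac.symm, by ext x; simp; tauto, h2, h3⟩
  · exact ⟨a, c, b, hac, hab, hbc.symm, by ext x; simp; tauto, h3, h2⟩
  · exact ⟨c, b, a, hbc.symm, hac.symm, hab.symm, by ext x; simp; tauto, h2, h1⟩

lemma pick3_injOn {α : Type} {a b c : α} (hab : a ≠ b) (hac : a ≠ c) (hbc : b ≠ c) :
    ∀ s < 3, ∀ r < 3, pick3 a b c s = pick3 a b c r → s = r := by
  intro s hs r hr h
  interval_cases s <;> interval_cases r <;> simp_all

/-- `c` extended to `ℕ`, with the junk value `0` outside `Fin n`. -/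
def natExtend {n : ℕ} (c : Fin n → ℕ) (x : ℕ) : ℕ := if h : x < n then c ⟨x, h⟩ else 0

lemma natExtend_val {n : ℕ} (c : Fin n → ℕ) (u : Fin n) : natExtend c u = c u :=
  dif_pos u.isLt

section CrossPairs

variable {n : ℕ} {adj : Fin n → Fin n → Bool} {m : ℕ} {c : Fin n → ℕ}

variable (adj c) in
def crossPairs : Finset (Fin n × Fin n) :=
  univ.filter fun p => adj p.1 p.2 = true ∧ c p.1 ≠ c p.2

lemma mem_crossPairs {p : Fin n × Fin n} :
    p ∈ crossPairs adj c ↔ adj p.1 p.2 = true ∧ c p.1 ≠ c p.2 := by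
  simp [crossPairs]

lemma crossPairs_symm (hsymm : ∀ u v, adj u v = adj v u) (x y : Fin n)
    (h : (x, y) ∈ crossPairs adj c) : (y, x) ∈ crossPairs adj c := by
  rw [mem_crossPairs] at h ⊢
  exact ⟨hsymm x y ▸ h.1, h.2.symm⟩

lemma outDeg_crossPairs_le (hc : IsTriangleLabelling adj m c)
    (hdeg : ∀ v, (univ.filter fun u => adj v u = true).card ≤ 5) (v : Fin n) :
    outDeg (crossPairs adj c) v ≤ 3 := by
  set mates := (univ.filter fun u => c u = c v).erase v
  have hmates : mates.card = 2 := by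
    rw [card_erase_of_mem (by simp), hc.card v]
  have hsub : (univ.filter fun w => (v, w) ∈ crossPairs adj c) ∪ mates ⊆
      univ.filter fun u => adj v u = true := by
    intro u hu
    simp only [mem_union, mem_filter, mem_univ, true_and, mem_crossPairs, mates, mem_erase]
      at hu ⊢
    rcases hu with hu | ⟨hne, hcu⟩
    · exact hu.1
    · exact hc.adj v u hcu.symm hne.symm
  have hdisj : Disjoint (univ.filter fun w => (v, w) ∈ crossPairs adj c) mates := by
    simp only [disjoint_left, mem_filter, mem_univ, true_and, mem_crossPairs, mates,
      mem_erase, not_and]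
    exact fun u hu _ hcu => hu.2 hcu.symm
  have := card_le_card hsub
  rw [card_union_of_disjoint hdisj, hmates] at this
  rw [outDeg_eq_card]
  linarith [hdeg v]

lemma cutAtt_crossPairs {e : ℕ} (he : e ∈ (cutHG adj (crossPairs adj c)).E) {x : ℕ}
    (hx : x ∈ cutAtt (crossPairs adj c) e) :
    x < n ∧ natExtend c x = natExtend c (cutOwner n e) := by
  rcases mem_cutHG_E.1 he with hb | hi | ho
  · obtain ⟨p, hadj, hp, rfl⟩ := mem_bEdges.1 hb
    rw [cutAtt_pairCode] at hx
    rw [cutOwner_pairCode]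
    simp only [List.mem_cons, List.not_mem_nil, or_false] at hx
    rcases hx with rfl | rfl
    · exact ⟨p.1.isLt, rfl⟩
    · refine ⟨p.2.isLt, ?_⟩
      simp only [mem_crossPairs, not_and, not_not] at hp
      rw [natExtend_val, natExtend_val, hp hadj]
  · obtain ⟨p, hp, rfl⟩ := mem_iEdges.1 hi
    rw [cutAtt_iEdge hp, List.mem_singleton] at hx
    rw [hx, cutOwner_iEdge]
    exact ⟨p.1.isLt, rfl⟩
  · obtain ⟨p, hp, rfl⟩ := mem_oEdges.1 ho
    rw [cutAtt_oEdge hp, List.mem_singleton] at hx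
    rw [hx, cutOwner_oEdge]
    exact ⟨p.2.isLt, rfl⟩

lemma IsTriangleLabelling.natExtend_lt (hc : IsTriangleLabelling adj m c) {x : ℕ} (hx : x < n) :
    natExtend c x < m := by
  rw [natExtend, dif_pos hx]
  exact hc.lt _

variable {v : ℕ → Fin n} {i : ℕ}

lemma filter_natExtend_eq (hvi : ∀ u, c u = i ↔ ∃ s < 3, v s = u) :
    (range n).filter (fun x => natExtend c x = i) = {(v 0 : ℕ), (v 1 : ℕ), (v 2 : ℕ)} := by
  ext x
  simp only [mem_filter, mem_range, mem_insert, mem_singleton]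
  constructor
  · rintro ⟨hx, hcx⟩
    rw [show natExtend c x = c ⟨x, hx⟩ from dif_pos hx, hvi] at hcx
    obtain ⟨s, hs, hvs⟩ := hcx
    interval_cases s <;> simp [hvs]
  · rintro (rfl | rfl | rfl) <;>
      exact ⟨Fin.isLt _, by rw [natExtend_val, hvi]; exact ⟨_, by omega, rfl⟩⟩

lemma mem_part_iff_triEdge (hirr : ∀ v, adj v v = false) (hc : IsTriangleLabelling adj m c)
    (hv : ∀ s < 3, ∀ r < 3, v s = v r → s = r) (hvi : ∀ u, c u = i ↔ ∃ s < 3, v s = u)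
    (e : ℕ) :
    e ∈ (cutHG adj (crossPairs adj c)).E ∧ natExtend c (cutOwner n e) = i ↔
      TriEdge (crossPairs adj c) v e := by
  constructor
  · rintro ⟨he, hei⟩
    rcases mem_cutHG_E.1 he with hb | hi | ho
    · obtain ⟨p, hadj, hp, rfl⟩ := mem_bEdges.1 hb
      rw [cutOwner_pairCode, natExtend_val] at hei
      simp only [mem_crossPairs, not_and, not_not] at hp
      obtain ⟨s, hs, hs'⟩ := (hvi p.1).1 hei
      obtain ⟨r, hr, hr'⟩ := (hvi p.2).1 ((hp hadj).symm.trans hei)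
      refine Or.inl ⟨s, hs, r, hr, ?_, by rw [hs', hr']⟩
      rintro rfl
      rw [← hs', hr', hirr] at hadj
      exact Bool.false_ne_true hadj
    · obtain ⟨p, hp, rfl⟩ := mem_iEdges.1 hi
      rw [cutOwner_iEdge, natExtend_val] at hei
      obtain ⟨s, hs, hs'⟩ := (hvi p.1).1 hei
      exact Or.inr (Or.inl ⟨s, hs, p.2, by rwa [hs'], by rw [hs']⟩)
    · obtain ⟨p, hp, rfl⟩ := mem_oEdges.1 ho
      rw [cutOwner_oEdge, natExtend_val] at hei
      obtain ⟨s, hs, hs'⟩ := (hvi p.2).1 hei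
      exact Or.inr (Or.inr ⟨s, hs, p.1, by rwa [hs'], by rw [hs']⟩)
  · have hci : ∀ s < 3, c (v s) = i := fun s hs => (hvi _).2 ⟨s, hs, rfl⟩
    rintro (⟨s, hs, r, hr, hsr, rfl⟩ | ⟨s, hs, w, hw, rfl⟩ | ⟨s, hs, w, hw, rfl⟩)
    · have hadj := hc.adj _ _ ((hci s hs).trans (hci r hr).symm) fun h => hsr (hv s hs r hr h)
      refine ⟨mem_cutHG_E.2 (Or.inl (mem_bEdges.2 ⟨_, hadj, ?_, rfl⟩)), ?_⟩
      · simp [mem_crossPairs, hci s hs, hci r hr]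
      · rw [cutOwner_pairCode, natExtend_val, hci s hs]
    · exact ⟨mem_cutHG_E.2 (Or.inr (Or.inl (mem_iEdges.2 ⟨_, hw, rfl⟩))),
        by rw [cutOwner_iEdge, natExtend_val, hci s hs]⟩
    · exact ⟨mem_cutHG_E.2 (Or.inr (Or.inr (mem_oEdges.2 ⟨_, hw, rfl⟩))),
        by rw [cutOwner_oEdge, natExtend_val, hci s hs]⟩

lemma exists_TBG_isomorphic_part (hsymm : ∀ u v, adj u v = adj v u)
    (hirr : ∀ v, adj v v = false) (hdeg : ∀ v, (univ.filter fun u => adj v u = true).card ≤ 5)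
    (hc : IsTriangleLabelling adj m c) (hi : i < m) :
    ∃ Z ∈ TBG.ZSet, ((cutHG adj (crossPairs adj c)).part (natExtend c)
      (fun e => natExtend c (cutOwner n e)) i).Isomorphic Z := by
  obtain ⟨v₀, rfl⟩ := hc.surj i hi
  obtain ⟨a, b, d, hab, had, hbd, ht, hle₁, hle₂⟩ :=
    exists_sorted_triple (outDeg (crossPairs adj c)) (hc.card v₀)
  have hv := pick3_injOn hab had hbd
  have hvi : ∀ u, c u = c v₀ ↔ ∃ s < 3, pick3 a b d s = u := fun u => by
    have hmem : c u = c v₀ ↔ u ∈ ({a, b, d} : Finset (Fin n)) := by rw [← ht]; simp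
    rw [hmem]
    simp only [mem_insert, mem_singleton]
    constructor
    · rintro (rfl | rfl | rfl)
      exacts [⟨0, by omega, rfl⟩, ⟨1, by omega, rfl⟩, ⟨2, by omega, rfl⟩]
    · rintro ⟨s, hs, rfl⟩
      interval_cases s <;> simp
  refine ⟨_, TH_mem_TBG_ZSet hle₁ hle₂ (outDeg_crossPairs_le hc hdeg d),
    isomorphic_TH_of_triEdge hv (crossPairs_symm hsymm) (filter_natExtend_eq hvi) fun e => ?_⟩
  rw [mem_filter]
  exact mem_part_iff_triEdge hirr hc hv hvi e

lemma isUnionOfCopies_cutHG (hsymm : ∀ u v, adj u v = adj v u) (hirr : ∀ v, adj v v = false)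
    (hdeg : ∀ v, (univ.filter fun u => adj v u = true).card ≤ 5)
    (hc : IsTriangleLabelling adj m c) :
    IsUnionOfCopies TBG.ZSet (cutHG adj (crossPairs adj c)) :=
  ⟨m, natExtend c, fun e => natExtend c (cutOwner n e),
    fun _ hx => hc.natExtend_lt (mem_range.1 hx),
    fun _ he => hc.natExtend_lt (cutAtt_crossPairs he (cutOwner_mem_cutAtt he)).1,
    fun _ he _ hx => mem_range.2 (cutAtt_crossPairs he hx).1,
    fun _ he _ hx => (cutAtt_crossPairs he hx).2,
    fun _ hi => exists_TBG_isomorphic_part hsymm hirr hdeg hc hi⟩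

end CrossPairs

theorem trianglePartition_iff_TBG_generates_general (n : ℕ) (adj : Fin n → Fin n → Bool)
    (hsymm : ∀ u v, adj u v = adj v u) (hirr : ∀ v, adj v v = false)
    (hdeg : ∀ v, (Finset.univ.filter (fun u => adj v u = true)).card ≤ 5) :
    TriPart adj ↔ BondingGrammar.Generates TBG (graphToHG n adj) := by
  refine ⟨fun h => ?_, triPart_of_generates⟩
  obtain ⟨m, c, hc⟩ := exists_isTriangleLabelling h
  exact ⟨_, isUnionOfCopies_cutHG hsymm hirr hdeg hc,
    reflTransGen_cutHG fun p hp => (mem_crossPairs.1 hp).1⟩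

/-- a connected simple undirected graph of maximum degree at most
5 admits a partition into triangles iff its hypergraph encoding `⌜G⌝` is
generated by the bonding grammar `TBG`. -/
theorem trianglePartition_iff_TBG_generates (n : ℕ) (adj : Fin n → Fin n → Bool)
    (hsymm : ∀ u v, adj u v = adj v u) (hirr : ∀ v, adj v v = false)
    (hconn : ∀ u v : Fin n, Relation.ReflTransGen (fun a b : Fin n => adj a b = true) u v)
    (hdeg : ∀ v, (Finset.univ.filter (fun u => adj v u = true)).card ≤ 5) :
    TriPart adj ↔ BondingGrammar.Generates TBG (graphToHG n adj) :=
  trianglePartition_iff_TBG_generates_general n adj hsymm hirr hdeg
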